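/- arXiv:2410.15139 — 7 statements merged into one kernel-verified Lean document; each statement's English description precedes it below -/
import Mathlib

section
/- Let w̃ : D^n(δ) → D^n(δ) be a map, and let C ⊂ D^n(δ) be a nonempty set with w̃(C) ⊂ C. Let {Λ_α}_{α∈I} be the (possibly uncountable) family of all absorbing sets for w̃ in C. Then the intersection M := ∩_{α∈I} Λ_α is exactly the set of all periodic points of w̃ in C, and consequently w̃(M) = M. -/
open Set

noncomputable section

/-- The δ-discretization of ℝⁿ: the set of centers of the cubes of the δ-grid,
i.e. `D^n(δ) = {δm : m ∈ ℤⁿ}`, viewed as a subset of `ℝⁿ = Fin n → ℝ`. -/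
def Dgrid (n : ℕ) (δ : ℝ) : Set (Fin n → ℝ) :=
  {x | ∃ m : Fin n → ℤ, x = fun j => δ * (m j : ℝ)}

/-- `Λ` is an absorbing set for `w` in `C`: `Λ ⊆ C` and every orbit of a point of `C`
eventually enters and stays in `Λ`. -/
def IsAbsorbing {X : Type*} (w : X → X) (C Λ : Set X) : Prop :=
  Λ ⊆ C ∧ ∀ x ∈ C, ∃ N : ℕ, ∀ i ≥ N, w^[i] x ∈ Λ

/-! A periodic point of `C` lies in every absorbing set, since its orbit returns to it at
arbitrarily large times. A non-periodic point `x` is visited at most once by any orbit, so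
`C \ {x}` is absorbing. -/

open Function

section Dynamics

variable {X : Type*} {w : X → X} {C Λ : Set X} {x : X}

theorem isAbsorbing_self (hC : MapsTo w C C) : IsAbsorbing w C C :=
  ⟨subset_rfl, fun _ hx => ⟨0, fun i _ => hC.iterate i hx⟩⟩

theorem IsAbsorbing.mem_of_mem_periodicPts (hΛ : IsAbsorbing w C Λ) (hxC : x ∈ C)
    (hx : x ∈ periodicPts w) : x ∈ Λ := by
  obtain ⟨k, hk, hkx⟩ := mem_periodicPts.1 hx
  obtain ⟨N, hN⟩ := hΛ.2 x hxC
  have hreturn : w^[k * N] x = x := hkx.mul_const N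
  simpa only [hreturn] using hN (k * N) (Nat.le_mul_of_pos_left N hk)

theorem iterate_ne_of_notMem_periodicPts (hx : x ∉ periodicPts w) {y : X} {i j : ℕ}
    (hij : i < j) (hi : w^[i] y = x) : w^[j] y ≠ x := by
  intro hj
  refine hx (mk_mem_periodicPts (Nat.sub_pos_of_lt hij) ?_)
  calc w^[j - i] x = w^[j - i] (w^[i] y) := by rw [hi]
    _ = w^[j] y := by rw [← iterate_add_apply, Nat.sub_add_cancel hij.le]
    _ = x := hj

theorem isAbsorbing_diff_singleton (hC : MapsTo w C C) (hx : x ∉ periodicPts w) :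
    IsAbsorbing w C (C \ {x}) := by
  refine ⟨sdiff_subset, fun y hy => ?_⟩
  by_cases hhit : ∃ i, w^[i] y = x
  · obtain ⟨i, hi⟩ := hhit
    exact ⟨i + 1, fun j hj =>
      ⟨hC.iterate j hy, iterate_ne_of_notMem_periodicPts hx (by omega) hi⟩⟩
  · push Not at hhit
    exact ⟨0, fun j _ => ⟨hC.iterate j hy, hhit j⟩⟩

theorem sInter_isAbsorbing_eq (hC : MapsTo w C C) :
    ⋂₀ {Λ | IsAbsorbing w C Λ} = C ∩ periodicPts w := by
  refine Subset.antisymm (fun x hx => ⟨hx C (isAbsorbing_self hC), ?_⟩) ?_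
  · by_contra hper
    exact (hx _ (isAbsorbing_diff_singleton hC hper)).2 rfl
  · exact fun x ⟨hxC, hx⟩ Λ hΛ => hΛ.mem_of_mem_periodicPts hxC hx

theorem Set.MapsTo.image_inter_periodicPts (hC : MapsTo w C C) :
    w '' (C ∩ periodicPts w) = C ∩ periodicPts w := by
  refine Subset.antisymm (image_subset_iff.2 fun y hy => ⟨hC hy.1, ?_⟩) ?_
  · exact (bijOn_periodicPts w).mapsTo hy.2
  · rintro x ⟨hxC, hx⟩
    obtain ⟨k, hk, hkx⟩ := mem_periodicPts.1 hx
    obtain ⟨m, rfl⟩ := Nat.exists_eq_add_one_of_ne_zero hk.ne'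
    refine ⟨w^[m] x, ⟨hC.iterate m hxC, ?_⟩, ?_⟩
    · exact mk_mem_periodicPts hk (hkx.apply_iterate m)
    · rw [← iterate_succ_apply' w m x]
      exact hkx

end Dynamics

theorem stmt_0_general (n : ℕ)
    (w : (Fin n → ℝ) → (Fin n → ℝ))
    (C : Set (Fin n → ℝ))
    (hwC : w '' C ⊆ C) :
    (⋂₀ {Λ | IsAbsorbing w C Λ}) = {x ∈ C | ∃ k ≥ 1, w^[k] x = x} ∧
      w '' (⋂₀ {Λ | IsAbsorbing w C Λ}) = ⋂₀ {Λ | IsAbsorbing w C Λ} := by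
  have hC : MapsTo w C C := mapsTo_iff_image_subset.2 hwC
  rw [sInter_isAbsorbing_eq hC]
  -- `∃ k ≥ 1, w^[k] x = x` is `x ∈ periodicPts w` unfolded
  exact ⟨rfl, hC.image_inter_periodicPts⟩

/-- the intersection of all absorbing sets for `w̃` in `C` is exactly the
set of periodic points of `w̃` in `C`, and consequently this intersection is mapped
onto itself by `w̃`. -/
theorem stmt_0 (n : ℕ) (hn : 1 ≤ n) (δ : ℝ) (hδ : 0 < δ)
    (w : (Fin n → ℝ) → (Fin n → ℝ)) (hw : ∀ x ∈ Dgrid n δ, w x ∈ Dgrid n δ)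
    (C : Set (Fin n → ℝ)) (hC : C ⊆ Dgrid n δ) (hCne : C.Nonempty)
    (hwC : w '' C ⊆ C) :
    (⋂₀ {Λ | IsAbsorbing w C Λ}) = {x ∈ C | ∃ k ≥ 1, w^[k] x = x} ∧
      w '' (⋂₀ {Λ | IsAbsorbing w C Λ}) = ⋂₀ {Λ | IsAbsorbing w C Λ} :=
  stmt_0_general n w C hwC
end
end

section
/- Let w : ℝ^n → ℝ^n be a contraction with respect to the metric d, with contraction factor λ ∈ [0, 1), and let w̃ : D^n(δ) → D^n(δ) be its δ-roundoff. Then for every point x̃ ∈ D^n(δ) and every i ∈ ℕ, d(w̃^∘i(x̃), w^∘i(x̃)) ≤ θ(1 − λ)^{−1}. -/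
open Set

noncomputable section

/-- The δ-roundoff of a point `x ∈ ℝⁿ`: the center of the half-open δ-cube
`C_δ(m) = ∏ⱼ [(mⱼ - 1/2)δ, (mⱼ + 1/2)δ)` containing `x`. -/
def roundPt (n : ℕ) (δ : ℝ) (x : Fin n → ℝ) : Fin n → ℝ :=
  fun j => δ * (⌊x j / δ + 1 / 2⌋ : ℤ)

/-- The δ-roundoff of a mapping `w : ℝⁿ → ℝⁿ`, i.e. `w̃(x̃) = (w(x̃))~`
(considered on the grid `D^n(δ)`, which this map preserves). -/
def roundMap (n : ℕ) (δ : ℝ) (w : (Fin n → ℝ) → (Fin n → ℝ)) :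
    (Fin n → ℝ) → (Fin n → ℝ) :=
  fun x => roundPt n δ (w x)

/-- The diameter, with respect to the metric induced by the norm `nrm`, of a δ-cube
of the δ-grid (taken for the cube centered at the origin); `θ` is half this value. -/
def cubeDiam (n : ℕ) (δ : ℝ) (nrm : (Fin n → ℝ) → ℝ) : ℝ :=
  sSup {r | ∃ x y : Fin n → ℝ,
    (∀ j, -(δ / 2) ≤ x j ∧ x j < δ / 2) ∧
    (∀ j, -(δ / 2) ≤ y j ∧ y j < δ / 2) ∧ r = nrm (x - y)}

/-!
The roundoff map moves every point by a vector of the half-open cube centred at the origin, and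
such a vector `u` has norm at most `θ`: for `t ∈ [0, 1)`, `u - (-t) • u = (1 + t) • u` is a
difference of two points of the cube, and we let `t → 1`. So the rounded orbit is a
`θ`-pseudo-orbit of the contraction `w`, and the error `eᵢ` between the two orbits obeys
`eᵢ₊₁ ≤ θ + λ eᵢ`, whence `eᵢ ≤ θ / (1 - λ)`.
-/

open Filter Topology

def halfOpenCube (n : ℕ) (δ : ℝ) : Set (Fin n → ℝ) :=
  {x | ∀ j, -(δ / 2) ≤ x j ∧ x j < δ / 2}

theorem iterate_sub_iterate_le {E F : Type*} [AddGroup E] [FunLike F E ℝ]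
    [AddGroupSeminormClass F E ℝ] (p : F) {f g : E → E} {ε lam : ℝ} (hlam : lam ∈ Ico (0 : ℝ) 1)
    (hf : ∀ x y, p (f x - f y) ≤ lam * p (x - y)) (hg : ∀ x, p (g x - f x) ≤ ε)
    (x : E) (i : ℕ) :
    p (g^[i] x - f^[i] x) ≤ ε * (1 - lam)⁻¹ := by
  have hlam1 : 0 < 1 - lam := sub_pos.mpr hlam.2
  induction i with
  | zero =>
    have hε : 0 ≤ ε := (apply_nonneg p _).trans (hg x)
    simpa using mul_nonneg hε (inv_nonneg.mpr hlam1.le)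
  | succ i ih =>
    set a := g^[i] x
    set b := f^[i] x
    rw [Function.iterate_succ_apply', Function.iterate_succ_apply', ← sub_add_sub_cancel _ (f a)]
    calc p (g a - f a + (f a - f b))
        ≤ ε + lam * (ε * (1 - lam)⁻¹) :=
          (map_add_le_add p _ _).trans
            (add_le_add (hg a) ((hf a b).trans (mul_le_mul_of_nonneg_left ih hlam.1)))
      _ = ε * (1 - lam)⁻¹ := by field_simp; ring

theorem le_cubeDiam {n : ℕ} {δ : ℝ} (p : Seminorm ℝ (Fin n → ℝ)) {x y : Fin n → ℝ}
    (hx : x ∈ halfOpenCube n δ) (hy : y ∈ halfOpenCube n δ) :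
    p (x - y) ≤ cubeDiam n δ p := by
  have hp : Continuous p := continuousOn_univ.mp (p.convexOn.continuousOn isOpen_univ)
  refine le_csSup (((isCompact_Icc (a := fun _ => -δ) (b := fun _ => δ)).bddAbove_image
    hp.continuousOn).mono ?_) ⟨x, y, hx, hy, rfl⟩
  rintro _ ⟨x', y', hx', hy', rfl⟩
  refine ⟨x' - y', ⟨fun j => ?_, fun j => ?_⟩, rfl⟩ <;>
    simp only [Pi.sub_apply] <;> linarith [hx' j, hy' j]

theorem two_mul_le_cubeDiam {n : ℕ} {δ : ℝ} (p : Seminorm ℝ (Fin n → ℝ)) {u : Fin n → ℝ}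
    (hu : u ∈ halfOpenCube n δ) : 2 * p u ≤ cubeDiam n δ p := by
  have hscaled : ∀ t ∈ Ico (0 : ℝ) 1, (1 + t) * p u ≤ cubeDiam n δ p := by
    rintro t ⟨ht0, ht1⟩
    have hmem : (-t) • u ∈ halfOpenCube n δ := fun j => by
      obtain ⟨hlo, hhi⟩ := hu j
      simp only [Pi.smul_apply, smul_eq_mul]
      constructor <;> nlinarith
    have hdiff : u - (-t) • u = (1 + t) • u := by rw [neg_smul, sub_neg_eq_add, add_smul, one_smul]
    have h := le_cubeDiam p hu hmem
    rwa [hdiff, map_smul_eq_mul, Real.norm_of_nonneg (by linarith)] at h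
  have hlim : Tendsto (fun t : ℝ => (1 + t) * p u) (𝓝[<] 1) (𝓝 (2 * p u)) := by
    have := ((continuous_const.add continuous_id).mul continuous_const).tendsto' 1 (2 * p u)
      (by norm_num : (1 + id (1 : ℝ)) * p u = 2 * p u)
    exact this.mono_left nhdsWithin_le_nhds
  exact le_of_tendsto hlim (eventually_of_mem (Ico_mem_nhdsLT zero_lt_one) hscaled)

theorem sub_roundPt_mem_halfOpenCube {n : ℕ} {δ : ℝ} (hδ : 0 < δ) (z : Fin n → ℝ) :
    z - roundPt n δ z ∈ halfOpenCube n δ := fun j => by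
  have hlo := Int.floor_le (z j / δ + 1 / 2)
  have hhi := Int.lt_floor_add_one (z j / δ + 1 / 2)
  have hz : z j = δ * (z j / δ) := by field_simp
  simp only [Pi.sub_apply, roundPt]
  constructor <;> nlinarith

theorem seminorm_roundPt_sub_le {n : ℕ} {δ : ℝ} (p : Seminorm ℝ (Fin n → ℝ)) (hδ : 0 < δ)
    (z : Fin n → ℝ) : p (roundPt n δ z - z) ≤ cubeDiam n δ p / 2 := by
  rw [← map_neg_eq_map, neg_sub]
  linarith [two_mul_le_cubeDiam p (sub_roundPt_mem_halfOpenCube hδ z)]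

theorem stmt_3_general (n : ℕ) (δ : ℝ) (hδ : 0 < δ)
    (nrm : (Fin n → ℝ) → ℝ)
    (hnrm_smul : ∀ (a : ℝ) (x : Fin n → ℝ), nrm (a • x) = |a| * nrm x)
    (hnrm_add : ∀ x y : Fin n → ℝ, nrm (x + y) ≤ nrm x + nrm y)
    (w : (Fin n → ℝ) → (Fin n → ℝ))
    (lam : ℝ) (hlam : lam ∈ Set.Ico (0 : ℝ) 1)
    (hcontr : ∀ x y : Fin n → ℝ, nrm (w x - w y) ≤ lam * nrm (x - y))
    (θ : ℝ) (hθ : θ = cubeDiam n δ nrm / 2) :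
    ∀ x ∈ Dgrid n δ, ∀ i : ℕ,
      nrm ((roundMap n δ w)^[i] x - w^[i] x) ≤ θ * (1 - lam)⁻¹ := by
  intro x _ i
  subst hθ
  let p : Seminorm ℝ (Fin n → ℝ) :=
    Seminorm.of nrm hnrm_add (by simpa only [Real.norm_eq_abs] using hnrm_smul)
  exact iterate_sub_iterate_le p hlam hcontr (fun y => seminorm_roundPt_sub_le p hδ (w y)) x i

/-- if `w` is a contraction with factor `λ ∈ [0,1)` with respect to a
norm-induced metric `d(x,y) = ‖x - y‖`, then the orbit of any grid point under the
δ-roundoff `w̃` shadows its orbit under `w`: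
`d(w̃^∘i(x̃), w^∘i(x̃)) ≤ θ (1 - λ)⁻¹` for all `i`. -/
theorem stmt_3 (n : ℕ) (hn : 1 ≤ n) (δ : ℝ) (hδ : 0 < δ)
    (nrm : (Fin n → ℝ) → ℝ)
    (hnrm_eq : ∀ x, nrm x = 0 ↔ x = 0)
    (hnrm_smul : ∀ (a : ℝ) (x : Fin n → ℝ), nrm (a • x) = |a| * nrm x)
    (hnrm_add : ∀ x y : Fin n → ℝ, nrm (x + y) ≤ nrm x + nrm y)
    (w : (Fin n → ℝ) → (Fin n → ℝ))
    (lam : ℝ) (hlam : lam ∈ Set.Ico (0 : ℝ) 1)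
    (hcontr : ∀ x y : Fin n → ℝ, nrm (w x - w y) ≤ lam * nrm (x - y))
    (θ : ℝ) (hθ : θ = cubeDiam n δ nrm / 2) :
    ∀ x ∈ Dgrid n δ, ∀ i : ℕ,
      nrm ((roundMap n δ w)^[i] x - w^[i] x) ≤ θ * (1 - lam)⁻¹ :=
  stmt_3_general n δ hδ nrm hnrm_smul hnrm_add w lam hlam hcontr θ hθ
end
end

section
/- Let V^(k) be a linear subspace of ℝ^n spanned by k distinct standard basis vectors of ℝ^n, with 0 < k < n. Let x̃, õ ∈ D^n(δ) with x̃ ∈ õ + V^(k). Then for every point x in the δ-cube C_δ(x̃/δ) (the δ-cube whose center is x̃), d_E(x, õ) ≥ d_E(x̃, õ) − δ√k/2. -/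
open Set

noncomputable section

def dE (n : ℕ) (x y : Fin n → ℝ) : ℝ :=
  Real.sqrt (∑ j, (x j - y j) ^ 2)

/-! The cube point `x` is compared with its projection onto `x̃ + V^(k)`, the point that agrees
with `x` on the coordinates of `V^(k)` and with `x̃` elsewhere. Since `õ` lies in `x̃ + V^(k)`,
the projection is no farther from `õ` than `x` is, and it lies within `δ√k/2` of `x̃`; the
triangle inequality finishes the proof. -/

section Euclidean

variable {n : ℕ}

theorem dE_eq_dist (u v : Fin n → ℝ) :
    dE n u v = dist (WithLp.toLp 2 u) (WithLp.toLp 2 v) := by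
  simp [dE, EuclideanSpace.dist_eq, Real.dist_eq, sq_abs]

theorem dE_triangle (a b c : Fin n → ℝ) : dE n a c ≤ dE n a b + dE n b c := by
  simp only [dE_eq_dist]
  exact dist_triangle _ _ _

theorem dE_le_dE_of_abs_sub_le {a b c : Fin n → ℝ} (h : ∀ j, |a j - c j| ≤ |b j - c j|) :
    dE n a c ≤ dE n b c := by
  refine Real.sqrt_le_sqrt (Finset.sum_le_sum fun j _ => ?_)
  simpa only [sq_abs] using pow_le_pow_left₀ (abs_nonneg _) (h j) 2

theorem dE_le_mul_sqrt_card {u v : Fin n → ℝ} {s : Finset (Fin n)} {r : ℝ} (hr : 0 ≤ r)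
    (h_off : ∀ j ∉ s, u j = v j) (h_on : ∀ j ∈ s, |u j - v j| ≤ r) :
    dE n u v ≤ r * Real.sqrt s.card := by
  have hsum : ∑ j, (u j - v j) ^ 2 ≤ s.card * r ^ 2 :=
    calc ∑ j, (u j - v j) ^ 2 = ∑ j ∈ s, (u j - v j) ^ 2 :=
          (Finset.sum_subset s.subset_univ fun j _ hj => by simp [h_off j hj]).symm
      _ ≤ ∑ _j ∈ s, r ^ 2 := Finset.sum_le_sum fun j hj => by
          simpa only [sq_abs] using pow_le_pow_left₀ (abs_nonneg _) (h_on j hj) 2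
      _ = s.card * r ^ 2 := by rw [Finset.sum_const, nsmul_eq_mul]
  calc dE n u v ≤ Real.sqrt (s.card * r ^ 2) := Real.sqrt_le_sqrt hsum
    _ = r * Real.sqrt s.card := by
        rw [Real.sqrt_mul (Nat.cast_nonneg _), Real.sqrt_sq hr, mul_comm]

end Euclidean

theorem stmt_7_general (n : ℕ) (δ : ℝ) (hδ : 0 < δ)
    (k : ℕ)
    (s : Finset (Fin n)) (hs : s.card = k)
    (xt o : Fin n → ℝ)
    (hmem : ∀ j ∉ s, xt j = o j)
    (x : Fin n → ℝ) (hx : ∀ j, xt j - δ / 2 ≤ x j ∧ x j < xt j + δ / 2) :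
    dE n xt o - δ * Real.sqrt k / 2 ≤ dE n x o := by
  set y := s.piecewise x xt
  have hyo : dE n y o ≤ dE n x o := dE_le_dE_of_abs_sub_le fun j => by
    by_cases hj : j ∈ s
    · simp [y, hj]
    · simp [y, hj, hmem j hj]
  have hxty : dE n xt y ≤ δ / 2 * Real.sqrt k := by
    rw [← hs]
    refine dE_le_mul_sqrt_card (by positivity) (fun j hj => by simp [y, hj]) fun j hj => ?_
    simp only [y, Finset.piecewise_eq_of_mem _ _ _ hj, abs_le]
    constructor <;> linarith [hx j]
  linarith [dE_triangle xt y o]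

/-- let `V^(k)` be the span of `k` distinct standard basis vectors
(given by a set `s` of coordinates, `|s| = k`, `0 < k < n`), and let
`x̃, õ ∈ D^n(δ)` with `x̃ ∈ õ + V^(k)` (i.e. `x̃` and `õ` agree off `s`).  Then every
point `x` of the δ-cube centered at `x̃` satisfies
`d_E(x, õ) ≥ d_E(x̃, õ) - δ√k/2`. -/
theorem stmt_7 (n : ℕ) (hn : 1 ≤ n) (δ : ℝ) (hδ : 0 < δ)
    (k : ℕ) (hk1 : 0 < k) (hk2 : k < n)
    (s : Finset (Fin n)) (hs : s.card = k)
    (xt o : Fin n → ℝ) (hxt : xt ∈ Dgrid n δ) (ho : o ∈ Dgrid n δ)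
    (hmem : ∀ j ∉ s, xt j = o j)
    (x : Fin n → ℝ) (hx : ∀ j, xt j - δ / 2 ≤ x j ∧ x j < xt j + δ / 2) :
    dE n xt o - δ * Real.sqrt k / 2 ≤ dE n x o :=
  stmt_7_general n δ hδ k s hs xt o hmem x hx
end
end

section
/- Let w : ℝ^n → ℝ^n be a contraction with respect to the Euclidean metric d_E, with contraction factor λ < 1/2, whose fixed point x_f coincides with a point õ ∈ D^n(δ) (the center of a δ-cube). Then the minimal absorbing set of the δ-roundoff w̃ is the singleton M[w̃] = {õ}. -/
/-!
Rounding moves each coordinate by at most `δ/2`, while a rounded coordinate different from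
the grid coordinate `δ m` lies at distance at least `δ` from it; hence rounding at most doubles
the distance to a grid point. So `w̃` shrinks the distance to `õ` by the factor `2λ < 1`. Distinct
grid points are `δ`-separated, so every orbit of `w̃` in the grid lands on `õ` after finitely many
steps and stays there, `õ` being fixed; and a fixed point lies in every absorbing set.
-/

open Set Filter

noncomputable section

/-- The intersection of all absorbing sets for `w` in `C`; it is called the
minimal absorbing set `M[w, C]` when it is itself absorbing in `C`. -/
def minAbsorbing {X : Type*} (w : X → X) (C : Set X) : Set X :=
  ⋂₀ {Λ | IsAbsorbing w C Λ}

section Absorbing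

variable {X : Type*} {f : X → X} {C : Set X} {o : X}

lemma isAbsorbing_singleton (ho : o ∈ C) (h : ∀ x ∈ C, ∀ᶠ i in atTop, f^[i] x = o) :
    IsAbsorbing f C {o} :=
  ⟨singleton_subset_iff.mpr ho, fun x hx => eventually_atTop.mp (h x hx)⟩

lemma IsAbsorbing.mem_of_isFixedPt {Λ : Set X} (hΛ : IsAbsorbing f C Λ) (ho : o ∈ C)
    (hfix : f o = o) : o ∈ Λ := by
  obtain ⟨N, hN⟩ := hΛ.2 o ho
  simpa only [Function.iterate_fixed hfix] using hN N le_rfl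

lemma minAbsorbing_eq_singleton (habs : IsAbsorbing f C {o}) (hfix : f o = o) :
    minAbsorbing f C = {o} := by
  refine (sInter_subset_of_mem habs).antisymm ?_
  rintro _ rfl Λ hΛ
  exact hΛ.mem_of_isFixedPt (habs.1 rfl) hfix

lemma eventually_iterate_eq_of_geometric_decay (V : X → ℝ) {q δ : ℝ} (hq0 : 0 ≤ q)
    (hq : q < 1) (hδ : 0 < δ) (hfC : MapsTo f C C) (hdecay : ∀ x, V (f x) ≤ q * V x)
    (hgap : ∀ x ∈ C, x ≠ o → δ ≤ V x) {x : X} (hx : x ∈ C) :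
    ∀ᶠ i in atTop, f^[i] x = o := by
  have hiter : ∀ i, V (f^[i] x) ≤ q ^ i * V x := by
    intro i
    induction i with
    | zero => simp
    | succ i ih =>
      rw [Function.iterate_succ_apply', pow_succ', mul_assoc]
      exact (hdecay _).trans (mul_le_mul_of_nonneg_left ih hq0)
  have hsmall : ∀ᶠ i in atTop, q ^ i * V x < δ := by
    have := (tendsto_pow_atTop_nhds_zero_of_lt_one hq0 hq).mul_const (V x)
    rw [zero_mul] at this
    exact this.eventually (gt_mem_nhds hδ)
  filter_upwards [hsmall] with i hi
  by_contra hne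
  exact (hgap _ (hfC.iterate i hx) hne).not_gt ((hiter i).trans_lt hi)

end Absorbing

section Roundoff

lemma le_abs_mul_intCast_sub {δ : ℝ} (hδ : 0 ≤ δ) {a b : ℤ} (hab : a ≠ b) :
    δ ≤ |δ * a - δ * b| := by
  have hone : (1 : ℝ) ≤ |((a - b : ℤ) : ℝ)| := by
    exact_mod_cast Int.one_le_abs (sub_ne_zero.mpr hab)
  rw [← mul_sub, ← Int.cast_sub, abs_mul, abs_of_nonneg hδ]
  nlinarith

lemma abs_mul_floor_sub_le {δ : ℝ} (hδ : 0 < δ) (y : ℝ) :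
    |δ * ⌊y / δ + 1 / 2⌋ - y| ≤ δ / 2 := by
  have hle := mul_le_mul_of_nonneg_left (Int.floor_le (y / δ + 1 / 2)) hδ.le
  have hlt := mul_lt_mul_of_pos_left (Int.sub_one_lt_floor (y / δ + 1 / 2)) hδ
  have hy : δ * (y / δ) = y := mul_div_cancel₀ y hδ.ne'
  rw [abs_le]
  constructor <;> nlinarith

lemma abs_mul_floor_sub_le_two_mul {δ : ℝ} (hδ : 0 < δ) (y : ℝ) (m : ℤ) :
    |δ * ⌊y / δ + 1 / 2⌋ - δ * m| ≤ 2 * |y - δ * m| := by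
  by_cases hm : ⌊y / δ + 1 / 2⌋ = m
  · rw [hm, sub_self, abs_zero]
    positivity
  have hfar := le_abs_mul_intCast_sub hδ.le hm
  have hround := abs_mul_floor_sub_le hδ y
  have htri := abs_sub_le (δ * ⌊y / δ + 1 / 2⌋) y (δ * m)
  linarith

lemma roundPt_mem_Dgrid (n : ℕ) (δ : ℝ) (x : Fin n → ℝ) : roundPt n δ x ∈ Dgrid n δ :=
  ⟨_, rfl⟩

lemma roundPt_of_mem_Dgrid {n : ℕ} {δ : ℝ} (hδ : 0 < δ) {x : Fin n → ℝ}
    (hx : x ∈ Dgrid n δ) : roundPt n δ x = x := by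
  obtain ⟨m, rfl⟩ := hx
  funext j
  have hfloor : ⌊δ * m j / δ + 1 / 2⌋ = m j := by
    rw [mul_div_cancel_left₀ _ hδ.ne', Int.floor_eq_iff]
    constructor <;> linarith
  simp only [roundPt, hfloor]

lemma abs_sub_le_dE {n : ℕ} (x y : Fin n → ℝ) (j : Fin n) : |x j - y j| ≤ dE n x y := by
  rw [dE, ← Real.sqrt_sq_eq_abs]
  exact Real.sqrt_le_sqrt <|
    Finset.single_le_sum (f := fun i => (x i - y i) ^ 2) (fun i _ => sq_nonneg _)
      (Finset.mem_univ j)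

lemma dE_le_mul_dE_of_abs_le {n : ℕ} {x x' y y' : Fin n → ℝ} {c : ℝ} (hc : 0 ≤ c)
    (h : ∀ j, |x j - x' j| ≤ c * |y j - y' j|) : dE n x x' ≤ c * dE n y y' := by
  have hsum : ∑ j, (x j - x' j) ^ 2 ≤ c ^ 2 * ∑ j, (y j - y' j) ^ 2 := by
    rw [Finset.mul_sum]
    refine Finset.sum_le_sum fun j _ => ?_
    rw [← sq_abs (x j - x' j), ← sq_abs (y j - y' j), ← mul_pow]
    exact pow_le_pow_left₀ (abs_nonneg _) (h j) 2
  calc dE n x x' ≤ Real.sqrt (c ^ 2 * ∑ j, (y j - y' j) ^ 2) := Real.sqrt_le_sqrt hsum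
    _ = c * dE n y y' := by rw [dE, Real.sqrt_mul (sq_nonneg c), Real.sqrt_sq hc]

lemma dE_roundPt_le {n : ℕ} {δ : ℝ} (hδ : 0 < δ) (y : Fin n → ℝ) {o : Fin n → ℝ}
    (ho : o ∈ Dgrid n δ) : dE n (roundPt n δ y) o ≤ 2 * dE n y o := by
  obtain ⟨m, rfl⟩ := ho
  exact dE_le_mul_dE_of_abs_le zero_le_two fun j => abs_mul_floor_sub_le_two_mul hδ (y j) (m j)

lemma le_dE_of_mem_Dgrid {n : ℕ} {δ : ℝ} (hδ : 0 ≤ δ) {x y : Fin n → ℝ}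
    (hx : x ∈ Dgrid n δ) (hy : y ∈ Dgrid n δ) (hne : x ≠ y) : δ ≤ dE n x y := by
  obtain ⟨a, rfl⟩ := hx
  obtain ⟨b, rfl⟩ := hy
  obtain ⟨j, hj⟩ : ∃ j, a j ≠ b j := by
    by_contra! h
    exact hne (funext fun j => by rw [h j])
  exact (le_abs_mul_intCast_sub hδ hj).trans (abs_sub_le_dE (fun j => δ * a j) (fun j => δ * b j) j)

end Roundoff

theorem stmt_8_general (n : ℕ) (δ : ℝ) (hδ : 0 < δ)
    (w : (Fin n → ℝ) → (Fin n → ℝ))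
    (lam : ℝ) (hlam0 : 0 ≤ lam) (hlam : lam < 1 / 2)
    (hcontr : ∀ x y : Fin n → ℝ, dE n (w x) (w y) ≤ lam * dE n x y)
    (o : Fin n → ℝ) (hog : o ∈ Dgrid n δ) (hfix : w o = o) :
    IsAbsorbing (roundMap n δ w) (Dgrid n δ) {o} ∧
      minAbsorbing (roundMap n δ w) (Dgrid n δ) = {o} := by
  set f := roundMap n δ w
  have hfixf : f o = o := by
    simp only [f, roundMap, hfix, roundPt_of_mem_Dgrid hδ hog]
  have hdecay : ∀ x, dE n (f x) o ≤ 2 * lam * dE n x o := by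
    intro x
    calc dE n (f x) o ≤ 2 * dE n (w x) o := dE_roundPt_le hδ (w x) hog
      _ ≤ 2 * lam * dE n x o := by linarith [hfix ▸ hcontr x o]
  have habs : IsAbsorbing f (Dgrid n δ) {o} :=
    isAbsorbing_singleton hog fun x hx =>
      eventually_iterate_eq_of_geometric_decay (fun x => dE n x o) (by linarith) (by linarith)
        hδ (fun x _ => roundPt_mem_Dgrid n δ (w x)) hdecay
        (fun x hx hne => le_dE_of_mem_Dgrid hδ.le hx hog hne) hx
  exact ⟨habs, minAbsorbing_eq_singleton habs hfixf⟩

/-- if `w` is a contraction w.r.t. the Euclidean metric with factor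
`λ < 1/2` whose fixed point coincides with a grid point `õ ∈ D^n(δ)`, then the
minimal absorbing set of its δ-roundoff `w̃` is the singleton `{õ}`. -/
theorem stmt_8 (n : ℕ) (hn : 1 ≤ n) (δ : ℝ) (hδ : 0 < δ)
    (w : (Fin n → ℝ) → (Fin n → ℝ))
    (lam : ℝ) (hlam0 : 0 ≤ lam) (hlam : lam < 1 / 2)
    (hcontr : ∀ x y : Fin n → ℝ, dE n (w x) (w y) ≤ lam * dE n x y)
    (o : Fin n → ℝ) (hog : o ∈ Dgrid n δ) (hfix : w o = o) :
    IsAbsorbing (roundMap n δ w) (Dgrid n δ) {o} ∧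
      minAbsorbing (roundMap n δ w) (Dgrid n δ) = {o} :=
  stmt_8_general n δ hδ w lam hlam0 hlam hcontr o hog hfix
end
end

section
/- Let w̃_1, …, w̃_N : S → S be a DIFS on S ⊂ D^n(δ), and let I ⊂ {1, …, N} be a nonempty set of indices i for which the minimal absorbing set M[w̃_i, S] exists. Let {A_k} be any family of pairwise disjoint nonempty subsets of S, each satisfying ∪_{j=1}^N w̃_j(A_k) ⊂ A_k. Then the cardinality of the family {A_k} is at most min_{i ∈ I} M_#[w̃_i, S], where M_#[w̃_i, S] denotes the number of components of M[w̃_i, S]. -/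
open Set

noncomputable section

/-- The components of the minimal absorbing set `M[w, S]`: the equivalence classes
of the orbit-coincidence relation `x ∼ y ↔ ∃ j k, w^[j] x = w^[k] y` on `M[w, S]`. -/
def components {X : Type*} (w : X → X) (S : Set X) : Set (Set X) :=
  {K | ∃ x₀ ∈ minAbsorbing w S,
    K = {y ∈ minAbsorbing w S | ∃ j k : ℕ, w^[j] y = w^[k] x₀}}

/-!
An invariant set `A ⊆ S` contains the forward orbit of each of its points, and that orbit
eventually enters the minimal absorbing set, so `A` meets `M[w, S]`. Assign to `A` the
component through such a point. Points in the same component have coinciding forward orbits,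
so two disjoint invariant sets are assigned different components.
-/

section Components

variable {X : Type*} {f : X → X} {S A B : Set X}

def component (f : X → X) (S : Set X) (x₀ : X) : Set X :=
  {y ∈ minAbsorbing f S | ∃ j k : ℕ, f^[j] y = f^[k] x₀}

theorem component_mem_components {x₀ : X} (hx₀ : x₀ ∈ minAbsorbing f S) :
    component f S x₀ ∈ components f S :=
  ⟨x₀, hx₀, rfl⟩

theorem mem_component_self {x₀ : X} (hx₀ : x₀ ∈ minAbsorbing f S) :
    x₀ ∈ component f S x₀ :=
  ⟨hx₀, 0, 0, rfl⟩

theorem not_disjoint_of_mem_component (hA : MapsTo f A A) (hB : MapsTo f B B) {a b : X}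
    (ha : a ∈ A) (hb : b ∈ B) (hab : a ∈ component f S b) : ¬Disjoint A B := by
  obtain ⟨-, j, k, hjk⟩ := hab
  exact not_disjoint_iff.2 ⟨f^[j] a, hA.iterate j ha, hjk ▸ hB.iterate k hb⟩

namespace IsAbsorbing

theorem inter_minAbsorbing_nonempty (habs : IsAbsorbing f S (minAbsorbing f S))
    (hAS : A ⊆ S) (hA : A.Nonempty) (hfA : MapsTo f A A) :
    (A ∩ minAbsorbing f S).Nonempty := by
  obtain ⟨x, hx⟩ := hA
  obtain ⟨m, hm⟩ := habs.2 x (hAS hx)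
  exact ⟨f^[m] x, hfA.iterate m hx, hm m le_rfl⟩

theorem encard_le_encard_components (habs : IsAbsorbing f S (minAbsorbing f S))
    {𝒜 : Set (Set X)} (h𝒜 : ∀ A ∈ 𝒜, A ⊆ S ∧ A.Nonempty ∧ MapsTo f A A)
    (hdisj : 𝒜.Pairwise Disjoint) :
    𝒜.encard ≤ (components f S).encard := by
  obtain rfl | ⟨A₀, hA₀⟩ := 𝒜.eq_empty_or_nonempty
  · simp
  have : Nonempty X := (h𝒜 A₀ hA₀).2.1.to_type
  choose! p hp using fun A hA ↦
    habs.inter_minAbsorbing_nonempty (h𝒜 A hA).1 (h𝒜 A hA).2.1 (h𝒜 A hA).2.2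
  refine encard_le_encard_of_injOn (f := fun A ↦ component f S (p A))
    (fun A hA ↦ component_mem_components (hp A hA).2) fun A hA B hB
    (hAB : component f S (p A) = component f S (p B)) ↦ ?_
  by_contra hne
  have hpA : p A ∈ component f S (p B) := hAB ▸ mem_component_self (hp A hA).2
  exact not_disjoint_of_mem_component (h𝒜 A hA).2.2 (h𝒜 B hB).2.2 (hp A hA).1 (hp B hB).1
    hpA (hdisj hA hB hne)

end IsAbsorbing

end Components

theorem stmt_14_general (n : ℕ)
    (S : Set (Fin n → ℝ))
    (N : ℕ)
    (w : Fin N → (Fin n → ℝ) → (Fin n → ℝ))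
    (I : Finset (Fin N))
    (hmin : ∀ i ∈ I, IsAbsorbing (w i) S (minAbsorbing (w i) S))
    (𝒜 : Set (Set (Fin n → ℝ)))
    (h𝒜 : ∀ A ∈ 𝒜, A ⊆ S ∧ A.Nonempty ∧ ∀ j, w j '' A ⊆ A)
    (hdisj : 𝒜.Pairwise Disjoint) :
    ∀ i ∈ I, 𝒜.encard ≤ (components (w i) S).encard := fun i hi ↦
  (hmin i hi).encard_le_encard_components
    (fun A hA ↦ ⟨(h𝒜 A hA).1, (h𝒜 A hA).2.1, mapsTo_iff_image_subset.2 ((h𝒜 A hA).2.2 i)⟩)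
    hdisj

/-- for a DIFS `w̃₁, …, w̃_N : S → S` on `S ⊆ D^n(δ)` and a nonempty
set `I` of indices for which the minimal absorbing sets exist, every family of
pairwise disjoint nonempty subsets of `S`, each closed under all the maps `w̃ⱼ`, has
cardinality at most `minᵢ∈I M_#[w̃ᵢ, S]`, the minimum number of components. -/
theorem stmt_14 (n : ℕ) (hn : 1 ≤ n) (δ : ℝ) (hδ : 0 < δ)
    (S : Set (Fin n → ℝ)) (hS : S ⊆ Dgrid n δ)
    (N : ℕ) (hN : 0 < N)
    (w : Fin N → (Fin n → ℝ) → (Fin n → ℝ))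
    (hw : ∀ i, ∀ x ∈ S, w i x ∈ S)
    (I : Finset (Fin N)) (hI : I.Nonempty)
    (hmin : ∀ i ∈ I, IsAbsorbing (w i) S (minAbsorbing (w i) S))
    (𝒜 : Set (Set (Fin n → ℝ)))
    (h𝒜 : ∀ A ∈ 𝒜, A ⊆ S ∧ A.Nonempty ∧ ∀ j, w j '' A ⊆ A)
    (hdisj : 𝒜.Pairwise Disjoint) :
    ∀ i ∈ I, 𝒜.encard ≤ (components (w i) S).encard :=
  stmt_14_general n S N w I hmin 𝒜 h𝒜 hdisj
end
end

section
/- Let w̃_1, …, w̃_N : S → S be a DIFS on S ⊂ D^n(δ), and let I ⊂ {1, …, N} be a nonempty set of indices i for which the minimal absorbing set M[w̃_i, S] exists. Suppose that for some i, j ∈ I and some component M_k[w̃_j, S] of M[w̃_j, S], the whole minimal absorbing set M[w̃_i, S] is contained in the basin of attraction B[M_k[w̃_j, S]]. Then any family of pairwise disjoint nonempty subsets of S, each closed under all the maps w̃_1, …, w̃_N (i.e., each A satisfies ∪_{l=1}^N w̃_l(A) ⊂ A), contains at most one set. -/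
open Set

noncomputable section

/-!
Every nonempty set `A ⊆ S` closed under all the maps contains a point of `M[w̃ᵢ, S]`,
since that set absorbs the `w̃ᵢ`-orbit of any point of `A`. By hypothesis the `w̃ⱼ`-orbit
of this point enters `K`, so it merges with the `w̃ⱼ`-orbit of a fixed point `x₀`
generating `K`; as `A` is `w̃ⱼ`-closed, it contains a tail of the orbit of `x₀`.
Two such sets share the later of the two tails, so no two of them are disjoint.
-/

section Orbits

variable {X : Type*} {f : X → X}

theorem not_disjoint_of_iterate_eq_iterate {A B : Set X} (hA : MapsTo f A A)
    (hB : MapsTo f B B) {a b x : X} (ha : a ∈ A) (hb : b ∈ B) {p q r s : ℕ}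
    (hax : f^[p] a = f^[q] x) (hbx : f^[r] b = f^[s] x) : ¬Disjoint A B := by
  have hxA : f^[q] x ∈ A := hax ▸ hA.iterate p ha
  have hxB : f^[s] x ∈ B := hbx ▸ hB.iterate r hb
  refine Set.not_disjoint_iff.2 ⟨f^[s + q] x, ?_, ?_⟩
  · rw [Function.iterate_add_apply]
    exact hA.iterate s hxA
  · rw [add_comm, Function.iterate_add_apply]
    exact hB.iterate q hxB

theorem IsAbsorbing.inter_nonempty_of_mapsTo {C Λ A : Set X} (hΛ : IsAbsorbing f C Λ)
    (hAC : A ⊆ C) (hA : A.Nonempty) (hfA : MapsTo f A A) : (A ∩ Λ).Nonempty := by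
  obtain ⟨a, ha⟩ := hA
  obtain ⟨m, hm⟩ := hΛ.2 a (hAC ha)
  exact ⟨f^[m] a, hfA.iterate m ha, hm m le_rfl⟩

theorem exists_forall_iterate_eq_of_mem_components {S K : Set X} (hK : K ∈ components f S) :
    ∃ x₀, ∀ y ∈ K, ∃ p q : ℕ, f^[p] y = f^[q] x₀ := by
  obtain ⟨x₀, -, rfl⟩ := hK
  exact ⟨x₀, fun y hy => hy.2⟩

end Orbits

theorem stmt_15_general (n : ℕ)
    (S : Set (Fin n → ℝ))
    (N : ℕ)
    (w : Fin N → (Fin n → ℝ) → (Fin n → ℝ))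
    (I : Finset (Fin N))
    (hmin : ∀ i ∈ I, IsAbsorbing (w i) S (minAbsorbing (w i) S))
    (i j : Fin N) (hi : i ∈ I)
    (K : Set (Fin n → ℝ)) (hK : K ∈ components (w j) S)
    (hbasin : minAbsorbing (w i) S ⊆ {x ∈ S | ∃ m : ℕ, (w j)^[m] x ∈ K})
    (𝒜 : Set (Set (Fin n → ℝ)))
    (h𝒜 : ∀ A ∈ 𝒜, A ⊆ S ∧ A.Nonempty ∧ ∀ l, w l '' A ⊆ A)
    (hdisj : 𝒜.Pairwise Disjoint) :
    𝒜.encard ≤ 1 := by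
  obtain ⟨x₀, hx₀⟩ := exists_forall_iterate_eq_of_mem_components hK
  have hinv : ∀ A ∈ 𝒜, ∀ l, MapsTo (w l) A A := fun A hA l =>
    mapsTo_iff_image_subset.2 ((h𝒜 A hA).2.2 l)
  have hmeet : ∀ A ∈ 𝒜, ∃ a ∈ A, ∃ p q : ℕ, (w j)^[p] a = (w j)^[q] x₀ := by
    intro A hA
    obtain ⟨hAS, hAne, -⟩ := h𝒜 A hA
    obtain ⟨a, haA, haM⟩ := (hmin i hi).inter_nonempty_of_mapsTo hAS hAne (hinv A hA i)
    obtain ⟨-, m, hm⟩ := hbasin haM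
    exact ⟨_, (hinv A hA j).iterate m haA, hx₀ _ hm⟩
  rw [Set.encard_le_one_iff]
  intro A B hA hB
  by_contra hAB
  obtain ⟨a, haA, p, q, ha⟩ := hmeet A hA
  obtain ⟨b, hbB, r, s, hb⟩ := hmeet B hB
  exact not_disjoint_of_iterate_eq_iterate (hinv A hA j) (hinv B hB j) haA hbB ha hb
    (hdisj hA hB hAB)

/-- for a DIFS `w̃₁, …, w̃_N : S → S` on `S ⊆ D^n(δ)`, if for some
`i, j ∈ I` (indices whose minimal absorbing sets exist) the whole set `M[w̃ᵢ, S]` is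
contained in the basin of attraction of one component `K` of `M[w̃ⱼ, S]`, then any
family of pairwise disjoint nonempty subsets of `S`, each closed under all the maps
`w̃₁, …, w̃_N`, contains at most one set. -/
theorem stmt_15 (n : ℕ) (hn : 1 ≤ n) (δ : ℝ) (hδ : 0 < δ)
    (S : Set (Fin n → ℝ)) (hS : S ⊆ Dgrid n δ)
    (N : ℕ) (hN : 0 < N)
    (w : Fin N → (Fin n → ℝ) → (Fin n → ℝ))
    (hw : ∀ i, ∀ x ∈ S, w i x ∈ S)
    (I : Finset (Fin N)) (hI : I.Nonempty)
    (hmin : ∀ i ∈ I, IsAbsorbing (w i) S (minAbsorbing (w i) S))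
    (i j : Fin N) (hi : i ∈ I) (hj : j ∈ I)
    (K : Set (Fin n → ℝ)) (hK : K ∈ components (w j) S)
    (hbasin : minAbsorbing (w i) S ⊆ {x ∈ S | ∃ m : ℕ, (w j)^[m] x ∈ K})
    (𝒜 : Set (Set (Fin n → ℝ)))
    (h𝒜 : ∀ A ∈ 𝒜, A ⊆ S ∧ A.Nonempty ∧ ∀ l, w l '' A ⊆ A)
    (hdisj : 𝒜.Pairwise Disjoint) :
    𝒜.encard ≤ 1 :=
  stmt_15_general n S N w I hmin i j hi K hK hbasin 𝒜 h𝒜 hdisj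
end
end

section
/- Let w_1, …, w_N : ℝ^n → ℝ^n be a hyperbolic IFS on (ℝ^n, d) with contraction factors λ_1, …, λ_N ∈ [0, 1), λ_max = max_i λ_i, and attractor A_∞. For each δ > 0 let w̃_1^{(δ)}, …, w̃_N^{(δ)} be the δ-roundoffs of the w_i, and let A(δ) ⊂ D^n(δ) be any nonempty set such that w̃_i^{(δ)}(A(δ)) ⊂ A(δ) for every i and every point x̃ ∈ A(δ) satisfies w̃_{i_k}^{(δ)} ∘ ⋯ ∘ w̃_{i_1}^{(δ)}(x̃) = x̃ for some k ≥ 1 and indices i_1, …, i_k ∈ {1, …, N}. Then A(δ) converges to A_∞ in the Hausdorff metric as δ → 0; that is, for every ε > 0 there exists δ_0 > 0 such that h(A(δ), A_∞) < ε for all δ ∈ (0, δ_0). -/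
open Set

noncomputable section

/-! Roundoff perturbs each map by at most `η = O(δ)`, so along any word `L` the roundoff orbit
of `x` stays within `λ_max ^ |L| d(x, a) + η / (1 - λ_max)` of the exact orbit of `a`. Points of
`A_∞` are reached by exact orbits of arbitrary length from inside the bounded set `A_∞`, and
points of `A(δ)` lie on roundoff cycles that can be run for arbitrarily many steps; in both cases
the first term is negligible and the distance is at most `η / (1 - λ_max) → 0`. -/

theorem Set.MapsTo.foldl {X ι : Type*} {s : Set X} {g : ι → X → X} (hg : ∀ i, MapsTo (g i) s s)
    (L : List ι) : MapsTo (fun x => L.foldl (fun z i => g i z) x) s s := by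
  induction L using List.reverseRecOn with
  | nil => exact mapsTo_id s
  | append_singleton L i ih =>
    intro x hx
    simpa only [List.foldl_concat] using hg i (ih hx)

theorem exists_foldl_eq_of_subset_iUnion_image {X ι : Type*} {s : Set X} {g : ι → X → X}
    (hs : s ⊆ ⋃ i, g i '' s) (k : ℕ) {a : X} (ha : a ∈ s) :
    ∃ b ∈ s, ∃ L : List ι, L.length = k ∧ L.foldl (fun z i => g i z) b = a := by
  induction k generalizing a with
  | zero => exact ⟨a, ha, [], rfl, rfl⟩
  | succ k ih =>
    obtain ⟨i, a', ha', rfl⟩ : ∃ i, ∃ a' ∈ s, g i a' = a := by simpa using hs ha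
    obtain ⟨b, hb, L, hL, rfl⟩ := ih ha'
    exact ⟨b, hb, L ++ [i], by simp [hL], List.foldl_concat ..⟩

theorem exists_foldl_eq_self_le_length {X ι : Type*} {F : X → ι → X} {x : X} {L : List ι}
    (hL : L ≠ []) (hx : L.foldl F x = x) (m : ℕ) :
    ∃ L' : List ι, m ≤ L'.length ∧ L'.foldl F x = x := by
  induction m with
  | zero => exact ⟨[], le_rfl, rfl⟩
  | succ m ih =>
    obtain ⟨L', hlen, hL'⟩ := ih
    refine ⟨L' ++ L, ?_, by rw [List.foldl_append, hL', hx]⟩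
    have := List.length_pos_iff.2 hL
    rw [List.length_append]
    omega

theorem eventually_pow_mul_lt {lam : ℝ} (h₀ : 0 ≤ lam) (h₁ : lam < 1) (R : ℝ) {θ : ℝ}
    (hθ : 0 < θ) : ∀ᶠ k in Filter.atTop, lam ^ k * R < θ := by
  have := (tendsto_pow_atTop_nhds_zero_of_lt_one h₀ h₁).mul_const R
  rw [zero_mul] at this
  exact this.eventually (gt_mem_nhds hθ)

section Shadowing

variable {E ι F : Type*} [AddGroup E] [FunLike F E ℝ] [AddGroupSeminormClass F E ℝ] (p : F)

theorem map_sub_le_map_sub_add_map_sub (x y z : E) : p (x - z) ≤ p (x - y) + p (y - z) := by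
  simpa only [sub_add_sub_cancel] using map_add_le_add p (x - y) (y - z)

variable {p} {f g : ι → E → E} {lam η θ : ℝ}

theorem map_foldl_sub_foldl_le (hlam₀ : 0 ≤ lam) (hlam₁ : lam < 1) (hη : 0 ≤ η)
    (hfg : ∀ i x, p (f i x - g i x) ≤ η) (hg : ∀ i x y, p (g i x - g i y) ≤ lam * p (x - y))
    (x a : E) (L : List ι) :
    p (L.foldl (fun z i => f i z) x - L.foldl (fun z i => g i z) a) ≤
      lam ^ L.length * p (x - a) + η / (1 - lam) := by
  induction L using List.reverseRecOn with
  | nil => simpa using div_nonneg hη (sub_nonneg.2 hlam₁.le)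
  | append_singleton L i ih =>
    set X := L.foldl (fun z i => f i z) x
    set Y := L.foldl (fun z i => g i z) a
    have hlam : 0 < 1 - lam := sub_pos.2 hlam₁
    rw [List.foldl_concat, List.foldl_concat]
    calc p (f i X - g i Y) ≤ p (f i X - g i X) + p (g i X - g i Y) :=
          map_sub_le_map_sub_add_map_sub p _ _ _
      _ ≤ η + lam * (lam ^ L.length * p (x - a) + η / (1 - lam)) :=
          add_le_add (hfg i X) ((hg i X Y).trans (mul_le_mul_of_nonneg_left ih hlam₀))
      _ = lam ^ (L ++ [i]).length * p (x - a) + η / (1 - lam) := by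
          rw [List.length_append, List.length_singleton, pow_succ]
          field_simp
          ring

theorem exists_mem_map_sub_lt_of_subset_iUnion_image (hlam₀ : 0 ≤ lam) (hlam₁ : lam < 1)
    (hη : 0 ≤ η) (hfg : ∀ i x, p (f i x - g i x) ≤ η)
    (hg : ∀ i x y, p (g i x - g i y) ≤ lam * p (x - y)) {S K : Set E}
    (hS : ∀ i, MapsTo (f i) S S) {x₀ : E} (hx₀ : x₀ ∈ S) (hK : K ⊆ ⋃ i, g i '' K) {R : ℝ}
    (hR : ∀ b ∈ K, p (x₀ - b) ≤ R) {a : E} (ha : a ∈ K) (hθ : 0 < θ) :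
    ∃ x ∈ S, p (x - a) < η / (1 - lam) + θ := by
  obtain ⟨k, hk⟩ := (eventually_pow_mul_lt hlam₀ hlam₁ R hθ).exists
  obtain ⟨b, hb, L, rfl, rfl⟩ := exists_foldl_eq_of_subset_iUnion_image hK k ha
  refine ⟨L.foldl (fun z i => f i z) x₀, MapsTo.foldl hS L hx₀, ?_⟩
  have hshadow := map_foldl_sub_foldl_le hlam₀ hlam₁ hη hfg hg x₀ b L
  have := mul_le_mul_of_nonneg_left (hR b hb) (pow_nonneg hlam₀ L.length)
  linarith

theorem exists_mem_map_sub_lt_of_foldl_eq_self (hlam₀ : 0 ≤ lam) (hlam₁ : lam < 1)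
    (hη : 0 ≤ η) (hfg : ∀ i x, p (f i x - g i x) ≤ η)
    (hg : ∀ i x y, p (g i x - g i y) ≤ lam * p (x - y)) {K : Set E}
    (hK : ∀ i, MapsTo (g i) K K) {q : E} (hq : q ∈ K) {x : E} {L : List ι} (hL : L ≠ [])
    (hx : L.foldl (fun z i => f i z) x = x) (hθ : 0 < θ) :
    ∃ a ∈ K, p (x - a) < η / (1 - lam) + θ := by
  obtain ⟨k, hk⟩ := Filter.eventually_atTop.1 (eventually_pow_mul_lt hlam₀ hlam₁ (p (x - q)) hθ)
  obtain ⟨L', hlen, hL'⟩ := exists_foldl_eq_self_le_length hL hx k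
  refine ⟨L'.foldl (fun z i => g i z) q, MapsTo.foldl hK L' hq, ?_⟩
  have hshadow := map_foldl_sub_foldl_le hlam₀ hlam₁ hη hfg hg x q L'
  rw [hL'] at hshadow
  linarith [hk _ hlen]

end Shadowing

theorem Seminorm.bound_of_finiteDimensional {E : Type*} [NormedAddCommGroup E] [NormedSpace ℝ E]
    [FiniteDimensional ℝ E] (p : Seminorm ℝ E) : ∃ C, 0 < C ∧ ∀ x, p x ≤ C * ‖x‖ :=
  p.bound_of_continuous_normedSpace (continuousOn_univ.1 (p.convexOn.continuousOn isOpen_univ))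

theorem norm_roundPt_sub_le (n : ℕ) {δ : ℝ} (hδ : 0 < δ) (y : Fin n → ℝ) :
    ‖roundPt n δ y - y‖ ≤ δ / 2 := by
  refine (pi_norm_le_iff_of_nonneg (by positivity)).2 fun j => ?_
  have hy : y j = δ * (y j / δ) := by field_simp
  rw [Pi.sub_apply, roundPt, ← round_eq, Real.norm_eq_abs, hy, ← mul_sub, abs_mul,
    abs_of_pos hδ, abs_sub_comm, mul_div_cancel_left₀ _ hδ.ne']
  simpa [div_eq_mul_one_div δ 2] using mul_le_mul_of_nonneg_left (abs_sub_round (y j / δ)) hδ.le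

theorem stmt_19_general (n : ℕ)
    (nrm : (Fin n → ℝ) → ℝ)
    (hnrm_smul : ∀ (a : ℝ) (x : Fin n → ℝ), nrm (a • x) = |a| * nrm x)
    (hnrm_add : ∀ x y : Fin n → ℝ, nrm (x + y) ≤ nrm x + nrm y)
    (N : ℕ)
    (w : Fin N → (Fin n → ℝ) → (Fin n → ℝ))
    (lam : Fin N → ℝ) (hlam : ∀ i, lam i ∈ Set.Ico (0 : ℝ) 1)
    (hcontr : ∀ i, ∀ x y : Fin n → ℝ, nrm (w i x - w i y) ≤ lam i * nrm (x - y))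
    (lmax : ℝ) (hlmax_ub : ∀ i, lam i ≤ lmax) (hlmax_mem : ∃ i, lam i = lmax)
    (Ainf : Set (Fin n → ℝ)) (hAinf_ne : Ainf.Nonempty)
    (hAinf_cpt : IsCompact Ainf) (hAinf_inv : Ainf = ⋃ i, w i '' Ainf)
    (A : ℝ → Set (Fin n → ℝ))
    (hAne : ∀ δ > (0 : ℝ), (A δ).Nonempty)
    (hAw : ∀ δ > (0 : ℝ), ∀ i, ∀ x ∈ A δ, roundMap n δ (w i) x ∈ A δ)
    (hrec : ∀ δ > (0 : ℝ), ∀ x ∈ A δ, ∃ L : List (Fin N), L ≠ [] ∧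
      L.foldl (fun p i => roundMap n δ (w i) p) x = x) :
    ∀ ε > (0 : ℝ), ∃ δ₀ > (0 : ℝ), ∀ δ : ℝ, 0 < δ → δ < δ₀ →
      (∀ a ∈ Ainf, ∃ x ∈ A δ, nrm (a - x) < ε) ∧
      (∀ x ∈ A δ, ∃ a ∈ Ainf, nrm (x - a) < ε) := by
  intro ε hε
  let p : Seminorm ℝ (Fin n → ℝ) :=
    Seminorm.of nrm hnrm_add fun a x => by rw [hnrm_smul, Real.norm_eq_abs]
  obtain ⟨i₀, rfl⟩ := hlmax_mem
  obtain ⟨hlam₀, hlam₁⟩ := hlam i₀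
  have hgap : 0 < 1 - lam i₀ := sub_pos.2 hlam₁
  obtain ⟨C, hC₀, hC⟩ := p.bound_of_finiteDimensional
  have hround : ∀ δ > 0, ∀ i x, p (roundMap n δ (w i) x - w i x) ≤ C * (δ / 2) :=
    fun δ hδ i x => (hC _).trans (mul_le_mul_of_nonneg_left (norm_roundPt_sub_le n hδ _) hC₀.le)
  have hg : ∀ i x y, p (w i x - w i y) ≤ lam i₀ * p (x - y) := fun i x y =>
    (hcontr i x y).trans (mul_le_mul_of_nonneg_right (hlmax_ub i) (apply_nonneg p _))
  have hAinf_maps : ∀ i, MapsTo (w i) Ainf Ainf := fun i a ha =>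
    hAinf_inv.ge (mem_iUnion_of_mem i (mem_image_of_mem _ ha))
  obtain ⟨q, hq⟩ := hAinf_ne
  refine ⟨ε * (1 - lam i₀) / C, by positivity, fun δ hδ hδ₀ => ?_⟩
  have hη : C * (δ / 2) / (1 - lam i₀) < ε / 2 := by
    rw [lt_div_iff₀ hC₀] at hδ₀
    rw [div_lt_iff₀ hgap]
    linarith
  obtain ⟨x₀, hx₀⟩ := hAne δ hδ
  obtain ⟨r, hr⟩ := hAinf_cpt.isBounded.subset_closedBall x₀
  have hR : ∀ b ∈ Ainf, p (x₀ - b) ≤ C * r := fun b hb =>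
    (hC _).trans (mul_le_mul_of_nonneg_left (by simpa [dist_eq_norm'] using hr hb) hC₀.le)
  constructor
  · intro a ha
    obtain ⟨x, hx, hxa⟩ := exists_mem_map_sub_lt_of_subset_iUnion_image hlam₀ hlam₁
      (by positivity) (hround δ hδ) hg (fun i x hx => hAw δ hδ i x hx) hx₀ hAinf_inv.le hR ha
      (half_pos hε)
    exact ⟨x, hx, show p (a - x) < ε by rw [map_sub_rev]; linarith⟩
  · intro x hx
    obtain ⟨L, hL, hLx⟩ := hrec δ hδ x hx
    obtain ⟨a, ha, hxa⟩ := exists_mem_map_sub_lt_of_foldl_eq_self hlam₀ hlam₁ (by positivity)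
      (hround δ hδ) hg hAinf_maps hq hL hLx (half_pos hε)
    exact ⟨a, ha, show p (x - a) < ε by linarith⟩

/-- let `w₁, …, w_N` be a hyperbolic IFS with attractor `A_∞`, and
for each `δ > 0` let `A(δ) ⊆ D^n(δ)` be a nonempty set closed under the
δ-roundoffs `w̃ᵢ^{(δ)}` all of whose points are recurrent (each is a fixed point of
some nonempty composition of the roundoff maps).  Then `A(δ) → A_∞` in the
Hausdorff metric as `δ → 0`: for every `ε > 0` there is `δ₀ > 0` such that for all
`0 < δ < δ₀`, `A_∞` and `A(δ)` are each contained in the open ε-neighbourhood of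
the other (for the norm-induced metric `d(x,y) = nrm (x-y)`), i.e.
`h(A(δ), A_∞) < ε`. -/
theorem stmt_19 (n : ℕ) (hn : 1 ≤ n)
    (nrm : (Fin n → ℝ) → ℝ)
    (hnrm_eq : ∀ x, nrm x = 0 ↔ x = 0)
    (hnrm_smul : ∀ (a : ℝ) (x : Fin n → ℝ), nrm (a • x) = |a| * nrm x)
    (hnrm_add : ∀ x y : Fin n → ℝ, nrm (x + y) ≤ nrm x + nrm y)
    (N : ℕ) (hN : 0 < N)
    (w : Fin N → (Fin n → ℝ) → (Fin n → ℝ))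
    (lam : Fin N → ℝ) (hlam : ∀ i, lam i ∈ Set.Ico (0 : ℝ) 1)
    (hcontr : ∀ i, ∀ x y : Fin n → ℝ, nrm (w i x - w i y) ≤ lam i * nrm (x - y))
    (lmax : ℝ) (hlmax_ub : ∀ i, lam i ≤ lmax) (hlmax_mem : ∃ i, lam i = lmax)
    (Ainf : Set (Fin n → ℝ)) (hAinf_ne : Ainf.Nonempty)
    (hAinf_cpt : IsCompact Ainf) (hAinf_inv : Ainf = ⋃ i, w i '' Ainf)
    (A : ℝ → Set (Fin n → ℝ))
    (hA : ∀ δ > (0 : ℝ), A δ ⊆ Dgrid n δ)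
    (hAne : ∀ δ > (0 : ℝ), (A δ).Nonempty)
    (hAw : ∀ δ > (0 : ℝ), ∀ i, ∀ x ∈ A δ, roundMap n δ (w i) x ∈ A δ)
    (hrec : ∀ δ > (0 : ℝ), ∀ x ∈ A δ, ∃ L : List (Fin N), L ≠ [] ∧
      L.foldl (fun p i => roundMap n δ (w i) p) x = x) :
    ∀ ε > (0 : ℝ), ∃ δ₀ > (0 : ℝ), ∀ δ : ℝ, 0 < δ → δ < δ₀ →
      (∀ a ∈ Ainf, ∃ x ∈ A δ, nrm (a - x) < ε) ∧
      (∀ x ∈ A δ, ∃ a ∈ Ainf, nrm (x - a) < ε) :=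
  stmt_19_general n nrm hnrm_smul hnrm_add N w lam hlam hcontr lmax hlmax_ub hlmax_mem Ainf hAinf_ne
    hAinf_cpt hAinf_inv A hAne hAw hrec
end
end
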